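/- Fix ℓ ∈ (1/2)ℤ₊ with ℓ ≥ 1/2, W = ℂ^{I×I} as above with operators D₋ e_{mn} = -√((ℓ+n)(ℓ-n+1)) e_{m,n-1} and D₀ e_{mn} = n e_{mn}. Define d'₀ : W → W², d'₀(u) = (D₋ u, D₀ u), and d'₁ : W² → W, d'₁(u₁,u₂) = D₋ u₂ - D₀ u₁ - u₁. Then d'₁ ∘ d'₀ = 0, d'₀ is injective, d'₁ is surjective, and ker d'₁ = range d'₀; hence the quotient ker d'₁ / range d'₀ is zero. -/

import Mathlib

open Matrix

/-- `L = 2ℓ`; the pair `(m, j)` with `j : Fin (L+1)` encodes the half-integers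
`(m, n)` with `n = -ℓ + j`.  `D₋ e_{mn} = -√((ℓ+n)(ℓ-n+1)) e_{m,n-1}`. -/
noncomputable def DmW (L : ℕ) :
    ((Fin (L+1) × Fin (L+1)) → ℂ) →ₗ[ℂ] ((Fin (L+1) × Fin (L+1)) → ℂ) :=
  Matrix.toLin' (fun r c : Fin (L+1) × Fin (L+1) =>
    if r.1 = c.1 ∧ (r.2 : ℕ) + 1 = (c.2 : ℕ) then
      -(Real.sqrt ((c.2 : ℕ) * ((L : ℝ) - (c.2 : ℕ) + 1)) : ℂ) else 0)

/-- `D₀ e_{mn} = n e_{mn}`. -/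
noncomputable def D0W (L : ℕ) :
    ((Fin (L+1) × Fin (L+1)) → ℂ) →ₗ[ℂ] ((Fin (L+1) × Fin (L+1)) → ℂ) :=
  Matrix.toLin' (Matrix.diagonal fun p : Fin (L+1) × Fin (L+1) => -(L : ℂ)/2 + (p.2 : ℕ))

/-- `d'₀ u = (D₋ u, D₀ u)`. -/
noncomputable def d0' (L : ℕ) :
    ((Fin (L+1) × Fin (L+1)) → ℂ) →ₗ[ℂ]
      ((Fin (L+1) × Fin (L+1)) → ℂ) × ((Fin (L+1) × Fin (L+1)) → ℂ) :=
  LinearMap.prod (DmW L) (D0W L)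

/-- `d'₁ (u₁, u₂) = D₋ u₂ - D₀ u₁ - u₁`. -/
noncomputable def d1' (L : ℕ) :
    (((Fin (L+1) × Fin (L+1)) → ℂ) × ((Fin (L+1) × Fin (L+1)) → ℂ)) →ₗ[ℂ]
      ((Fin (L+1) × Fin (L+1)) → ℂ) :=
  (DmW L) ∘ₗ LinearMap.snd ℂ _ _ -
    (D0W L + LinearMap.id) ∘ₗ LinearMap.fst ℂ _ _

/-!
`D₀` acts diagonally with eigenvalues `n`, which are strict half-integers, so both `D₀` and
`D₀ + 1` are invertible. Since `D₋` lowers `n` by one, `D₋ D₀ = (D₀ + 1) D₋`. For any three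
operators with `A B = C A`, the maps `u ↦ (A u, B u)` and `(u₁, u₂) ↦ A u₂ - C u₁` form a
complex `V → V × V → V`; it is exact in the middle once `B` is onto and `C` is injective,
since then `(u₁, u₂)` is the image of `B⁻¹ u₂`.
-/

open Function

section Complex

variable {R V : Type*} [Semiring R] [AddCommGroup V] [Module R V] (A B C : V →ₗ[R] V)

theorem sub_comp_fst_comp_prod_eq_zero (h : A ∘ₗ B = C ∘ₗ A) :
    (A ∘ₗ LinearMap.snd R V V - C ∘ₗ LinearMap.fst R V V) ∘ₗ A.prod B = 0 := by
  ext u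
  simpa [sub_eq_zero] using LinearMap.congr_fun h u

theorem prod_injective_of_injective_right (hB : Injective B) : Injective (A.prod B) :=
  fun _ _ huv => hB (congrArg Prod.snd huv)

theorem sub_comp_fst_surjective (hC : Surjective C) :
    Surjective (A ∘ₗ LinearMap.snd R V V - C ∘ₗ LinearMap.fst R V V) := by
  intro v
  obtain ⟨u, rfl⟩ := hC v
  exact ⟨(-u, 0), by simp⟩

theorem ker_sub_comp_fst_eq_range_prod (h : A ∘ₗ B = C ∘ₗ A) (hB : Surjective B)
    (hC : Injective C) :
    LinearMap.ker (A ∘ₗ LinearMap.snd R V V - C ∘ₗ LinearMap.fst R V V) =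
      LinearMap.range (A.prod B) := by
  refine le_antisymm ?_ (LinearMap.range_le_ker_iff.mpr (sub_comp_fst_comp_prod_eq_zero A B C h))
  rintro ⟨u₁, u₂⟩ hu
  obtain ⟨u, rfl⟩ := hB u₂
  have hAu : A (B u) = C u₁ := by simpa [sub_eq_zero] using hu
  refine ⟨u, Prod.ext (hC ?_) rfl⟩
  exact (LinearMap.congr_fun h u).symm.trans hAu

end Complex

theorem bijective_of_apply_eq_mul {ι K : Type*} [Field K] (f : (ι → K) →ₗ[K] (ι → K))
    (d : ι → K) (hd : ∀ i, d i ≠ 0) (hf : ∀ v i, f v i = d i * v i) : Bijective f := by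
  refine ⟨fun v w hvw => funext fun i => mul_left_cancel₀ (hd i) ?_, fun w => ?_⟩
  · rw [← hf, ← hf, hvw]
  · exact ⟨fun i => (d i)⁻¹ * w i, funext fun i => by rw [hf, mul_inv_cancel_left₀ (hd i)]⟩

theorem Odd.div_two_ne_natCast {K : Type*} [Field K] [CharZero K] {L : ℕ} (hL : Odd L)
    (k : ℕ) : (L : K) / 2 ≠ k := by
  obtain ⟨m, rfl⟩ := hL
  intro h
  have hK : ((2 * m + 1 : ℕ) : K) = (2 * k : ℕ) := by
    rw [Nat.cast_mul, ← h]; push_cast; ring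
  have := Nat.cast_injective hK
  omega

theorem D0W_apply (L : ℕ) (v : Fin (L+1) × Fin (L+1) → ℂ) (p : Fin (L+1) × Fin (L+1)) :
    D0W L v p = (-(L : ℂ)/2 + (p.2 : ℕ)) * v p := by
  simp [D0W, Matrix.toLin'_apply, Matrix.mulVec_diagonal]

theorem D0W_bijective {L : ℕ} (hL : Odd L) : Bijective (D0W L) :=
  bijective_of_apply_eq_mul _ _
    (fun p h => hL.div_two_ne_natCast (p.2 : ℕ) (by linear_combination -h)) (D0W_apply L)

theorem D0W_add_id_bijective {L : ℕ} (hL : Odd L) :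
    Bijective (D0W L + LinearMap.id : _ →ₗ[ℂ] _) :=
  bijective_of_apply_eq_mul (D0W L + LinearMap.id) (fun p => -(L : ℂ)/2 + (p.2 : ℕ) + 1)
    (fun p h => hL.div_two_ne_natCast ((p.2 : ℕ) + 1) (by push_cast; linear_combination -h))
    (fun v p => by simp [D0W_apply, add_mul])

theorem DmW_comp_D0W (L : ℕ) : DmW L ∘ₗ D0W L = (D0W L + LinearMap.id) ∘ₗ DmW L := by
  have hD : D0W L + LinearMap.id = Matrix.toLin'
      (Matrix.diagonal fun p : Fin (L+1) × Fin (L+1) => -(L : ℂ)/2 + (p.2 : ℕ) + 1) := by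
    rw [D0W, ← Matrix.toLin'_one, ← map_add, ← Matrix.diagonal_one, Matrix.diagonal_add]
  rw [hD, DmW, D0W]
  erw [← Matrix.toLin'_mul, ← Matrix.toLin'_mul]
  congr 1
  ext r c
  erw [Matrix.mul_diagonal, Matrix.diagonal_mul]
  split_ifs with h
  · rw [← h.2]; push_cast; ring
  · simp

/-- `ℓ ∈ 1/2 + ℤ₊` is a strict half-integer, i.e. `L = 2ℓ` is odd. -/
theorem stmt_17 (L : ℕ) (hL : Odd L) :
    d1' L ∘ₗ d0' L = 0 ∧
    Function.Injective (d0' L) ∧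
    Function.Surjective (d1' L) ∧
    LinearMap.ker (d1' L) = LinearMap.range (d0' L) := by
  have hcomm := DmW_comp_D0W L
  exact ⟨sub_comp_fst_comp_prod_eq_zero _ _ _ hcomm,
    prod_injective_of_injective_right _ _ (D0W_bijective hL).1,
    sub_comp_fst_surjective _ _ (D0W_add_id_bijective hL).2,
    ker_sub_comp_fst_eq_range_prod _ _ _ hcomm (D0W_bijective hL).2 (D0W_add_id_bijective hL).1⟩
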